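/- Near-orthogonality from RIP: Let X ∈ ℝ^{n×p} and let S1, S2 ⊆ {1,...,p} be disjoint index sets with ζ_{|S1|+|S2|} < 1 (the RIP constant of X at order |S1|+|S2|). Then for any u ∈ ℝ^{|S2|}, ‖X_{S1}^T X_{S2} u‖₂ ≤ ζ_{|S1|+|S2|} ‖u‖₂. -/

import Mathlib

/-!
Extend `v` on `S₁` and `±u` on `S₂` by zero to vectors supported on `S₁ ∪ S₂`. RIP applied to
`v + u` and `v - u`, together with polarization, gives
`⟪X_{S₁} v, X_{S₂} u⟫ ≤ ζ (‖v‖² + ‖u‖²) / 2`. For `w = X_{S₁}ᵀ X_{S₂} u ≠ 0`, the choice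
`v = (‖u‖ / ‖w‖) w` turns the left side into `‖u‖ ‖w‖` and the right side into `ζ ‖u‖²`.
-/

open Matrix

noncomputable def norm2 {n : ℕ} (v : Fin n → ℝ) : ℝ := Real.sqrt (∑ i, v i ^ 2)

def IsRIP {n p : ℕ} (X : Matrix (Fin n) (Fin p) ℝ) (K : ℕ) (ζ : ℝ) : Prop :=
  ∀ v : Fin p → ℝ, (Finset.univ.filter (fun i => v i ≠ 0)).card ≤ K →
    (1 - ζ) * norm2 v ^ 2 ≤ norm2 (X.mulVec v) ^ 2 ∧
      norm2 (X.mulVec v) ^ 2 ≤ (1 + ζ) * norm2 v ^ 2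

open Function

lemma norm2_sq {n : ℕ} (v : Fin n → ℝ) : norm2 v ^ 2 = v ⬝ᵥ v := by
  rw [norm2, Real.sq_sqrt (by positivity)]
  simp only [dotProduct, sq]

lemma norm2_nonneg {n : ℕ} (v : Fin n → ℝ) : 0 ≤ norm2 v := Real.sqrt_nonneg _

lemma norm2_pos {n : ℕ} {v : Fin n → ℝ} (hv : v ≠ 0) : 0 < norm2 v := by
  refine (norm2_nonneg v).lt_of_ne fun h => hv (dotProduct_self_eq_zero.1 ?_)
  rw [← norm2_sq, ← h, sq, zero_mul]

lemma dotProduct_extend_zero {ι κ R : Type*} [Fintype ι] [Fintype κ]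
    [NonUnitalNonAssocSemiring R] {e : ι → κ} (he : Injective e) (f : κ → R) (x : ι → R) :
    f ⬝ᵥ extend e x 0 = (f ∘ e) ⬝ᵥ x := by
  classical
  rw [dotProduct, ← Finset.sum_subset (Finset.subset_univ (Finset.univ.image e)),
    Finset.sum_image he.injOn]
  · simp only [he.extend_apply, dotProduct, Function.comp_apply]
  · intro j _ hj
    rw [extend_apply' _ _ _ (by simpa using hj), Pi.zero_apply, mul_zero]

lemma card_filter_extend_zero_ne_le {ι κ R : Type*} [Fintype ι] [Fintype κ] [Zero R]
    [DecidableEq R] (e : ι → κ) (x : ι → R) :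
    (Finset.univ.filter fun j => extend e x 0 j ≠ 0).card ≤ Fintype.card ι := by
  classical
  calc (Finset.univ.filter fun j => extend e x 0 j ≠ 0).card
      ≤ (Finset.univ.image e).card := Finset.card_le_card fun j hj => by
        by_contra hj'
        simp only [Finset.mem_image, Finset.mem_univ, true_and] at hj'
        simp [extend_apply' _ _ _ hj'] at hj
    _ ≤ Fintype.card ι := Finset.card_image_le

def IsNearIsometry {m ι : Type*} [Fintype m] [Fintype ι] (Y : Matrix m ι ℝ) (ζ : ℝ) : Prop :=
  ∀ x : ι → ℝ, (1 - ζ) * (x ⬝ᵥ x) ≤ (Y *ᵥ x) ⬝ᵥ (Y *ᵥ x) ∧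
    (Y *ᵥ x) ⬝ᵥ (Y *ᵥ x) ≤ (1 + ζ) * (x ⬝ᵥ x)

lemma IsRIP.isNearIsometry_submatrix {n p K : ℕ} {X : Matrix (Fin n) (Fin p) ℝ} {ζ : ℝ}
    (hX : IsRIP X K ζ) {ι : Type*} [Fintype ι] {e : ι → Fin p} (he : Injective e)
    (hK : Fintype.card ι ≤ K) : IsNearIsometry (X.submatrix id e) ζ := by
  intro x
  have hmul : X *ᵥ extend e x 0 = X.submatrix id e *ᵥ x := by
    ext k
    exact dotProduct_extend_zero he (X k) x
  have hnorm : extend e x 0 ⬝ᵥ extend e x 0 = x ⬝ᵥ x := by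
    rw [dotProduct_extend_zero he, extend_comp he]
  have := hX (extend e x 0) ((card_filter_extend_zero_ne_le e x).trans hK)
  rwa [norm2_sq, norm2_sq, hmul, hnorm] at this

lemma IsNearIsometry.dotProduct_mulVec_le {m ι₁ ι₂ : Type*} [Fintype m] [Fintype ι₁]
    [Fintype ι₂] {A : Matrix m ι₁ ℝ} {B : Matrix m ι₂ ℝ} {ζ : ℝ}
    (h : IsNearIsometry (fromCols A B) ζ) (v : ι₁ → ℝ) (u : ι₂ → ℝ) :
    v ⬝ᵥ ((Aᵀ * B) *ᵥ u) ≤ ζ * (v ⬝ᵥ v + u ⬝ᵥ u) / 2 := by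
  have hplus := (h (Sum.elim v u)).2
  have hminus := (h (Sum.elim v (-u))).1
  simp only [fromCols_mulVec_sumElim, sumElim_dotProduct_sumElim, mulVec_neg,
    neg_dotProduct_neg, ← sub_eq_add_neg] at hplus hminus
  rw [← mulVec_mulVec, dotProduct_mulVec, vecMul_transpose]
  simp only [add_dotProduct, dotProduct_add, sub_dotProduct, dotProduct_sub,
    dotProduct_comm (B *ᵥ u) (A *ᵥ v)] at hplus hminus
  linarith

lemma norm2_le_of_forall_dotProduct_le {m : ℕ} (w : Fin m → ℝ) {c ζ : ℝ} (hc : 0 < c)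
    (h : ∀ v, v ⬝ᵥ w ≤ ζ * (v ⬝ᵥ v + c ^ 2) / 2) : norm2 w ≤ ζ * c := by
  have hw := norm2_sq w
  rcases (norm2_nonneg w).eq_or_lt with ha | ha
  · have := h 0
    rw [zero_dotProduct, zero_dotProduct, zero_add] at this
    rw [← ha]
    nlinarith
  · have := h ((c / norm2 w) • w)
    simp only [smul_dotProduct, dotProduct_smul, smul_eq_mul, ← hw] at this
    field_simp at this
    linarith

lemma submatrix_id_sumElim {m n ι₁ ι₂ R : Type*} (X : Matrix m n R) (e₁ : ι₁ → n)
    (e₂ : ι₂ → n) :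
    X.submatrix id (Sum.elim e₁ e₂) = fromCols (X.submatrix id e₁) (X.submatrix id e₂) := by
  ext k (i | i) <;> rfl

theorem rip_near_orthogonality_general {n p s₁ s₂ : ℕ} (X : Matrix (Fin n) (Fin p) ℝ) (ζ : ℝ)
    (hRIP : IsRIP X (s₁ + s₂) ζ)
    (e₁ : Fin s₁ → Fin p) (e₂ : Fin s₂ → Fin p)
    (he₁ : Function.Injective e₁) (he₂ : Function.Injective e₂)
    (hdisj : ∀ i j, e₁ i ≠ e₂ j) (u : Fin s₂ → ℝ) :
    norm2 (((X.submatrix id e₁)ᵀ * X.submatrix id e₂).mulVec u) ≤ ζ * norm2 u := by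
  rcases eq_or_ne u 0 with rfl | hu
  · simp [norm2]
  have he : Injective (Sum.elim e₁ e₂) := he₁.sumElim he₂ hdisj
  have hnear := hRIP.isNearIsometry_submatrix he (by simp)
  rw [submatrix_id_sumElim] at hnear
  refine norm2_le_of_forall_dotProduct_le _ (norm2_pos hu) fun v => ?_
  rw [norm2_sq]
  exact hnear.dotProduct_mulVec_le v u

/-- Near-orthogonality from RIP: for disjoint index sets `S₁, S₂` (encoded by injections
with disjoint ranges) and RIP constant `ζ` of order `|S₁| + |S₂|`,
`‖X_{S₁}ᵀ X_{S₂} u‖₂ ≤ ζ ‖u‖₂`. -/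
theorem rip_near_orthogonality {n p s₁ s₂ : ℕ} (X : Matrix (Fin n) (Fin p) ℝ) (ζ : ℝ)
    (hζ1 : ζ < 1) (hRIP : IsRIP X (s₁ + s₂) ζ)
    (e₁ : Fin s₁ → Fin p) (e₂ : Fin s₂ → Fin p)
    (he₁ : Function.Injective e₁) (he₂ : Function.Injective e₂)
    (hdisj : ∀ i j, e₁ i ≠ e₂ j) (u : Fin s₂ → ℝ) :
    norm2 (((X.submatrix id e₁)ᵀ * X.submatrix id e₂).mulVec u) ≤ ζ * norm2 u :=
  rip_near_orthogonality_general X ζ hRIP e₁ e₂ he₁ he₂ hdisj u
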